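/- Let P be an LPOD and let M be a three-valued answer set of P. Then M, viewed as a four-valued interpretation, is a ⪯-minimal four-valued model of P and M is solid. -/

import Mathlib

/-! Four truth values F < F* < T* < T. -/
inductive V4 : Type
  | F | Fs | Ts | T
  deriving DecidableEq, Repr

instance : Fintype V4 := ⟨{V4.F, V4.Fs, V4.Ts, V4.T}, fun x => by cases x <;> decide⟩

namespace V4

def toNat : V4 → ℕ
  | F => 0
  | Fs => 1
  | Ts => 2
  | T => 3

theorem toNat_injective : Function.Injective toNat := by
  intro a b h
  cases a <;> cases b <;> simp_all [toNat]

instance : LinearOrder V4 := LinearOrder.lift' toNat toNat_injective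

instance : BoundedOrder V4 where
  top := T
  le_top a := by cases a <;> decide
  bot := F
  bot_le a := by cases a <;> decide

/-- Negation-as-failure: `not φ` is `T` if `φ ≤ F*`, else `F`. -/
def notv (a : V4) : V4 := if a ≤ Fs then T else F

/-- Ordered disjunction on truth values: `u × v = v` if `u = F*`, else `u`. -/
def times (a b : V4) : V4 := if a = Fs then b else a

end V4

variable {α : Type}

/-- A ground literal: an atom together with a polarity (`true` = the atom itself,
`false` = its strong negation). -/
structure Lit (α : Type) where
  atom : α
  positive : Bool
  deriving DecidableEq

/-- A (four-valued) interpretation assigns a truth value to every literal.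
Three-valued interpretations are the `solid` ones (no `T*` value). -/
abbrev Interp (α : Type) := Lit α → V4

/-- `I` is solid (equivalently, three-valued) if it assigns `T*` to no literal. -/
def solid (I : Interp α) : Prop := ∀ l, I l ≠ V4.Ts

/-- `I` is consistent: no atom has both the atom and its strong negation `T`. -/
def consistentI (I : Interp α) : Prop :=
  ∀ a : α, ¬ (I ⟨a, true⟩ = V4.T ∧ I ⟨a, false⟩ = V4.T)

/-- `I` takes values only in `{F, T}`. -/
def twoValued (I : Interp α) : Prop := ∀ l, I l = V4.F ∨ I l = V4.T

/-- Value of the conjunction of a list of literals. -/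
def evalConj (I : Interp α) (L : List (Lit α)) : V4 := (L.map I).foldr min V4.T

/-- Value of the conjunction `not B1 ∧ ⋯ ∧ not Bk`. -/
def evalNegs (I : Interp α) (L : List (Lit α)) : V4 :=
  (L.map (fun b => V4.notv (I b))).foldr min V4.T

/-- Value of the disjunction of a list of literals. -/
def evalDisj (I : Interp α) (L : List (Lit α)) : V4 := (L.map I).foldr max V4.F

/-- Value of an ordered disjunction of the given (nonempty) list of values.
(`F*` is a right identity for `×`, so the fold computes `v1 × ⋯ × vn`.) -/
def evalOD (vs : List V4) : V4 := vs.foldr V4.times V4.Fs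

/-- Pointwise `≤` on interpretations. -/
def interpLE (I J : Interp α) : Prop := ∀ l, I l ≤ J l

/-- The four-valued relation `⪯`: `u ⪯ v` iff `u = v` or `u ≺ v`, where
`F ≺ F*`, `F ≺ T*`, `F ≺ T` and `T* ≺ T`.  On three-valued (solid)
interpretations it restricts to the ordering generated by `F ≺ F*`, `F ≺ T`. -/
def preceq (u v : V4) : Prop :=
  u = v ∨ (u = V4.F ∧ v ≠ V4.F) ∨ (u = V4.Ts ∧ v = V4.T)

/-- Pointwise `⪯` on interpretations. -/
def interpPreceq (I J : Interp α) : Prop := ∀ l, preceq (I l) (J l)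

/-- The set of literals that are `T` in `I`. -/
def collapse (I : Interp α) : Set (Lit α) := { l | I l = V4.T }

/-! ### LPOD rules -/

/-- An LPOD rule `C1 × ⋯ × Cn ← A1,…,Am, not B1,…,not Bk` with head
`c1 :: cs` (so the head is nonempty). -/
structure Rule (α : Type) where
  c1 : Lit α
  cs : List (Lit α)
  pos : List (Lit α)
  neg : List (Lit α)

def Rule.headList (R : Rule α) : List (Lit α) := R.c1 :: R.cs

def Rule.headVal (R : Rule α) (I : Interp α) : V4 := evalOD (R.headList.map I)

def Rule.bodyVal (R : Rule α) (I : Interp α) : V4 :=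
  min (evalConj I R.pos) (evalNegs I R.neg)

/-- `I` satisfies the rule `R` (the rule evaluates to `T`). -/
def ruleSat (I : Interp α) (R : Rule α) : Prop := R.bodyVal I ≤ R.headVal I

/-- `I` is a model of the LPOD `P`. -/
def isModel (I : Interp α) (P : Set (Rule α)) : Prop := ∀ R ∈ P, ruleSat I R

/-! ### The ×-reduct of an LPOD -/

/-- A reduct rule `C ← [F*,] A1,…,Am`; `fstar` records whether the constant `F*`
occurs in the body. -/
structure RedRule (α : Type) where
  head : Lit α
  pos : List (Lit α)
  fstar : Bool

def RedRule.bodyVal (r : RedRule α) (I : Interp α) : V4 :=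
  min (if r.fstar then V4.Fs else V4.T) (evalConj I r.pos)

def redSat (I : Interp α) (r : RedRule α) : Prop := r.bodyVal I ≤ I r.head

def redModel (I : Interp α) (Q : Set (RedRule α)) : Prop := ∀ r ∈ Q, redSat I r

/-- Reduct rules generated by a head `C1,…,Cn`: rules `Cj ← F*, body` for
`j < r` and `Cr ← body`, where `r` is the least index with
`I C1 = ⋯ = I C_{r-1} = F*` and (`r = n` or `I Cr ≠ F*`). -/
def xredHead (I : Interp α) (body : List (Lit α)) : List (Lit α) → List (RedRule α)
  | [] => []
  | [c] => [⟨c, body, false⟩]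
  | c :: c' :: rest =>
    if I c = V4.Fs then ⟨c, body, true⟩ :: xredHead I body (c' :: rest)
    else [⟨c, body, false⟩]

/-- The ×-reduct of a rule w.r.t. `I`. -/
def xredRule (I : Interp α) (R : Rule α) : List (RedRule α) :=
  if ∃ b ∈ R.neg, I b = V4.T then [] else xredHead I R.pos R.headList

/-- The ×-reduct of an LPOD w.r.t. `I`. -/
def xreduct (I : Interp α) (P : Set (Rule α)) : Set (RedRule α) :=
  { r | ∃ R ∈ P, r ∈ xredRule I R }

/-- `M` is a three-valued answer set of the LPOD `P`: a consistent three-valued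
interpretation that is the `≤`-least (three-valued) model of `P^M_×`. -/
def threeAnswerSet (P : Set (Rule α)) (M : Interp α) : Prop :=
  solid M ∧ consistentI M ∧ redModel M (xreduct M P) ∧
  ∀ N : Interp α, solid N → redModel N (xreduct M P) → interpLE M N

/-! ### Two-valued notions: Brewka answer sets and GL answer sets -/

/-- A set of literals is consistent if it contains no complementary pair. -/
def twoConsistent (N : Set (Lit α)) : Prop :=
  ∀ a : α, ¬ (Lit.mk a true ∈ N ∧ Lit.mk a false ∈ N)

/-- `N` is a (two-valued) Brewka-model of the LPOD `P`. -/
def brewkaModel (N : Set (Lit α)) (P : Set (Rule α)) : Prop :=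
  ∀ R ∈ P, (∀ a ∈ R.pos, a ∈ N) → (∀ b ∈ R.neg, b ∉ N) → ∃ c ∈ R.headList, c ∈ N

/-- A positive rule `C ← A1,…,Am`. -/
structure PosRule (α : Type) where
  head : Lit α
  pos : List (Lit α)

/-- `N` is a two-valued model of a positive program. -/
def posModel (N : Set (Lit α)) (Q : Set (PosRule α)) : Prop :=
  ∀ r ∈ Q, (∀ a ∈ r.pos, a ∈ N) → r.head ∈ N

/-- The Brewka ×-reduct of an LPOD w.r.t. a set of literals `N`:
`Ci ← A1,…,Am` whenever `Ci ∈ N` and `N ∩ {C1,…,C_{i-1},B1,…,Bk} = ∅`. -/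
def brewkaReduct (N : Set (Lit α)) (P : Set (Rule α)) : Set (PosRule α) :=
  { r | ∃ R ∈ P, ∃ l1 l2 : List (Lit α),
      R.headList = l1 ++ r.head :: l2 ∧ r.pos = R.pos ∧ r.head ∈ N ∧
      (∀ c ∈ l1, c ∉ N) ∧ (∀ b ∈ R.neg, b ∉ N) }

/-- `N` is a Brewka answer set of the LPOD `P`. -/
def brewkaAnswerSet (P : Set (Rule α)) (N : Set (Lit α)) : Prop :=
  twoConsistent N ∧ brewkaModel N P ∧ posModel N (brewkaReduct N P) ∧
  ∀ N', posModel N' (brewkaReduct N P) → N ⊆ N'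

/-- The Gelfond–Lifschitz reduct of an extended logic program (an LPOD all
of whose rule heads are single literals) w.r.t. a set of literals `N`. -/
def glReduct (P : Set (Rule α)) (N : Set (Lit α)) : Set (PosRule α) :=
  { r | ∃ R ∈ P, (∀ b ∈ R.neg, b ∉ N) ∧ r.head = R.c1 ∧ r.pos = R.pos }

/-- `N` is a standard answer set of the extended logic program `P`: a consistent
set of literals that is the least model of `P^N`. -/
def stdAnswerSet (P : Set (Rule α)) (N : Set (Lit α)) : Prop :=
  twoConsistent N ∧ posModel N (glReduct P N) ∧
  ∀ N', posModel N' (glReduct P N) → N ⊆ N'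

/-! ### DLPODs -/

/-- A DLPOD rule `𝒞1 × ⋯ × 𝒞n ← A1,…,Am, not B1,…,not Bk`, where each `𝒞i`
is a disjunction of literals; the head is `c1 :: cs` (nonempty). -/
structure DRule (α : Type) where
  c1 : List (Lit α)
  cs : List (List (Lit α))
  pos : List (Lit α)
  neg : List (Lit α)

def DRule.headList (R : DRule α) : List (List (Lit α)) := R.c1 :: R.cs

def DRule.headVal (R : DRule α) (I : Interp α) : V4 :=
  evalOD (R.headList.map (evalDisj I))

def DRule.bodyVal (R : DRule α) (I : Interp α) : V4 :=
  min (evalConj I R.pos) (evalNegs I R.neg)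

def dRuleSat (I : Interp α) (R : DRule α) : Prop := R.bodyVal I ≤ R.headVal I

def isDModel (I : Interp α) (P : Set (DRule α)) : Prop := ∀ R ∈ P, dRuleSat I R

/-- A disjunctive reduct rule `𝒞 ← [F*,] A1,…,Am`. -/
structure DRedRule (α : Type) where
  head : List (Lit α)
  pos : List (Lit α)
  fstar : Bool

def DRedRule.bodyVal (r : DRedRule α) (I : Interp α) : V4 :=
  min (if r.fstar then V4.Fs else V4.T) (evalConj I r.pos)

def dredSat (I : Interp α) (r : DRedRule α) : Prop := r.bodyVal I ≤ evalDisj I r.head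

def dredModel (I : Interp α) (Q : Set (DRedRule α)) : Prop := ∀ r ∈ Q, dredSat I r

def dxredHead (I : Interp α) (body : List (Lit α)) :
    List (List (Lit α)) → List (DRedRule α)
  | [] => []
  | [c] => [⟨c, body, false⟩]
  | c :: c' :: rest =>
    if evalDisj I c = V4.Fs then ⟨c, body, true⟩ :: dxredHead I body (c' :: rest)
    else [⟨c, body, false⟩]

/-- The ×-reduct of a DLPOD rule w.r.t. `I`. -/
def dxredRule (I : Interp α) (R : DRule α) : List (DRedRule α) :=
  if ∃ b ∈ R.neg, I b = V4.T then [] else dxredHead I R.pos R.headList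

/-- The ×-reduct of a DLPOD w.r.t. `I`. -/
def dxreduct (I : Interp α) (P : Set (DRule α)) : Set (DRedRule α) :=
  { r | ∃ R ∈ P, r ∈ dxredRule I R }

/-- `M` is an answer set of the DLPOD `P`: a consistent three-valued
interpretation that is a `≤`-minimal (three-valued) model of `P^M_×`. -/
def dAnswerSet (P : Set (DRule α)) (M : Interp α) : Prop :=
  solid M ∧ consistentI M ∧ dredModel M (dxreduct M P) ∧
  ∀ N : Interp α, solid N → dredModel N (dxreduct M P) → interpLE N M → N = M

/-- A positive disjunctive rule `C1 ∨ ⋯ ∨ Cq ← A1,…,Am`. -/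
structure DPosRule (α : Type) where
  head : List (Lit α)
  pos : List (Lit α)

/-- `N` is a two-valued model of a positive disjunctive program. -/
def dposModel (N : Set (Lit α)) (Q : Set (DPosRule α)) : Prop :=
  ∀ r ∈ Q, (∀ a ∈ r.pos, a ∈ N) → ∃ c ∈ r.head, c ∈ N

/-- The Gelfond–Lifschitz reduct of a disjunctive extended logic program (a
DLPOD all of whose rule heads are single disjunctions). -/
def glDReduct (P : Set (DRule α)) (N : Set (Lit α)) : Set (DPosRule α) :=
  { r | ∃ R ∈ P, (∀ b ∈ R.neg, b ∉ N) ∧ r.head = R.c1 ∧ r.pos = R.pos }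

/-- `N` is a standard disjunctive answer set: a consistent set of literals that
is a minimal two-valued model of `P^N`. -/
def stdDAnswerSet (P : Set (DRule α)) (N : Set (Lit α)) : Prop :=
  twoConsistent N ∧ dposModel N (glDReduct P N) ∧
  ∀ N', dposModel N' (glDReduct P N) → N' ⊆ N → N' = N

/-! Every three-valued answer set `M` satisfies its own reduct, and a reduct rule `Cj ← F*, body`
is only generated when `M(Cj) = F*`, where `×` passes on to the next option; reading the reduct
back rule by rule shows that `M` satisfies `P`. For minimality, let `N ⪯ M` be a four-valued model
of `P` and lower every `T*` of `N` to `F*`. Since `N ⪯ M` keeps `N` at `F` or `F*` exactly where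
`M` is `F*`, the resulting three-valued interpretation is again a model of `P^M_×`, so it lies above
`M`; this is compatible with `N ⪯ M` only if `N = M`. -/

namespace V4

theorem le_T (v : V4) : v ≤ T := by cases v <;> decide

def solidify (v : V4) : V4 := if v = Ts then Fs else v

theorem solidify_ne_Ts (v : V4) : solidify v ≠ Ts := by cases v <;> decide

theorem solidify_le (v : V4) : solidify v ≤ v := by cases v <;> decide

theorem le_solidify {e v : V4} (he : e ≠ Ts) (h : e ≤ v) : e ≤ solidify v := by
  revert e v; decide

theorem times_of_ne_Fs {v : V4} (hv : v ≠ Fs) (w : V4) : times v w = v := if_neg hv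

theorem times_Fs_right (v : V4) : times v Fs = v := by cases v <;> decide

theorem le_times_of_le_Fs {e v w : V4} (hv : v ≤ Fs) (h : e ≤ times v w) :
    min Fs e ≤ solidify v ∧ e ≤ w := by
  revert e v w; decide

end V4

theorem preceq.le_Fs {u v : V4} (h : preceq u v) (hv : v ≤ V4.Fs) : u ≤ V4.Fs := by
  revert u v; unfold preceq; decide

theorem preceq.ne_Fs {u v : V4} (h : preceq u v) (hv : v ≠ V4.Fs) : u ≠ V4.Fs := by
  revert u v; unfold preceq; decide

theorem preceq.eq_of_le_solidify {u v : V4} (h : preceq u v) (hv : v ≤ V4.solidify u) :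
    u = v := by
  revert u v; unfold preceq; decide

theorem solid.le_Fs {I : Interp α} (hI : solid I) {l : Lit α} (hl : I l ≠ V4.T) :
    I l ≤ V4.Fs := by
  have hTs := hI l
  revert hl hTs; cases I l <;> decide

theorem solid_solidify_comp (N : Interp α) : solid (V4.solidify ∘ N) :=
  fun l => V4.solidify_ne_Ts (N l)

theorem evalOD_cons (v : V4) (vs : List V4) : evalOD (v :: vs) = V4.times v (evalOD vs) := rfl

theorem evalOD_singleton (v : V4) : evalOD [v] = v := V4.times_Fs_right v

theorem le_evalConj_iff {I : Interp α} {L : List (Lit α)} {e : V4} :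
    e ≤ evalConj I L ↔ ∀ b ∈ L, e ≤ I b := by
  induction L with
  | nil => simp [evalConj, V4.le_T]
  | cons a t ih => simp [evalConj, ← ih]

theorem evalConj_le {I : Interp α} {L : List (Lit α)} {b : Lit α} (hb : b ∈ L) :
    evalConj I L ≤ I b :=
  le_evalConj_iff.1 le_rfl b hb

theorem evalConj_mono {I J : Interp α} (h : ∀ l, I l ≤ J l) (L : List (Lit α)) :
    evalConj I L ≤ evalConj J L :=
  le_evalConj_iff.2 fun b hb => (evalConj_le hb).trans (h b)

theorem evalConj_ne_Ts {I : Interp α} (hI : solid I) (L : List (Lit α)) :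
    evalConj I L ≠ V4.Ts := by
  intro h
  have hT : ∀ b ∈ L, V4.T ≤ I b := fun b hb => by
    have hTs : V4.Ts ≤ I b := h ▸ evalConj_le hb
    have hne := hI b
    revert hTs hne; cases I b <;> decide
  have := le_evalConj_iff.2 hT
  rw [h] at this
  exact absurd this (by decide)

-- `evalNegs I L` is by definition `evalConj (fun b => V4.notv (I b)) L`.
theorem Rule.bodyVal_le_notv (R : Rule α) (I : Interp α) {b : Lit α} (hb : b ∈ R.neg) :
    R.bodyVal I ≤ V4.notv (I b) :=
  (min_le_right _ _).trans (evalConj_le (I := fun b => V4.notv (I b)) hb)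

theorem Rule.bodyVal_eq_evalConj {R : Rule α} {I : Interp α} (h : ∀ b ∈ R.neg, I b ≤ V4.Fs) :
    R.bodyVal I = evalConj I R.pos := by
  have hneg : evalNegs I R.neg = V4.T :=
    le_antisymm (V4.le_T _) <| le_evalConj_iff.2 fun b hb => by simp [V4.notv, h b hb]
  rw [Rule.bodyVal, hneg, min_eq_left (V4.le_T _)]

theorem redSat_mk_false {I : Interp α} {c : Lit α} {body : List (Lit α)} :
    redSat I ⟨c, body, false⟩ ↔ evalConj I body ≤ I c := by
  simp [redSat, RedRule.bodyVal, min_eq_right (V4.le_T _)]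

theorem redSat_mk_true {I : Interp α} {c : Lit α} {body : List (Lit α)} :
    redSat I ⟨c, body, true⟩ ↔ min V4.Fs (evalConj I body) ≤ I c := by
  simp [redSat, RedRule.bodyVal]

theorem xredRule_eq_xredHead {I : Interp α} {R : Rule α} (h : ∀ b ∈ R.neg, I b ≠ V4.T) :
    xredRule I R = xredHead I R.pos R.headList :=
  if_neg fun ⟨b, hb, hbT⟩ => h b hb hbT

theorem le_evalOD_of_redSat_xredHead (I : Interp α) (body : List (Lit α)) :
    ∀ (c : Lit α) (cs : List (Lit α)), (∀ r ∈ xredHead I body (c :: cs), redSat I r) →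
      evalConj I body ≤ evalOD ((c :: cs).map I)
  | c, [], h => by
    simpa [evalOD_singleton, redSat_mk_false] using h ⟨c, body, false⟩ (by simp [xredHead])
  | c, c' :: rest, h => by
    by_cases hc : I c = V4.Fs
    · rw [List.map_cons, evalOD_cons, hc]
      refine le_evalOD_of_redSat_xredHead I body c' rest fun r hr => h r ?_
      simp [xredHead, hc, hr]
    · rw [List.map_cons, evalOD_cons, V4.times_of_ne_Fs hc]
      exact redSat_mk_false.1 (h _ (by simp [xredHead, hc]))

theorem redSat_solidify_xredHead {M N : Interp α} (hNM : interpPreceq N M)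
    (body : List (Lit α)) :
    ∀ (c : Lit α) (cs : List (Lit α)),
      evalConj (V4.solidify ∘ N) body ≤ evalOD ((c :: cs).map N) →
      ∀ r ∈ xredHead M body (c :: cs), redSat (V4.solidify ∘ N) r
  | c, [], h, r, hr => by
    rw [xredHead, List.mem_singleton] at hr
    subst hr
    rw [List.map_singleton, evalOD_singleton] at h
    exact redSat_mk_false.2 (V4.le_solidify (evalConj_ne_Ts (solid_solidify_comp N) _) h)
  | c, c' :: rest, h, r, hr => by
    rw [List.map_cons, evalOD_cons] at h
    by_cases hc : M c = V4.Fs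
    · obtain ⟨hhead, htail⟩ := V4.le_times_of_le_Fs ((hNM c).le_Fs hc.le) h
      rw [xredHead, if_pos hc, List.mem_cons] at hr
      rcases hr with rfl | hr
      · exact redSat_mk_true.2 hhead
      · exact redSat_solidify_xredHead hNM body c' rest htail r hr
    · rw [V4.times_of_ne_Fs ((hNM c).ne_Fs hc)] at h
      rw [xredHead, if_neg hc, List.mem_singleton] at hr
      subst hr
      exact redSat_mk_false.2 (V4.le_solidify (evalConj_ne_Ts (solid_solidify_comp N) _) h)

theorem ruleSat_of_redSat_xredRule {M : Interp α} {R : Rule α} (hM : solid M)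
    (h : ∀ r ∈ xredRule M R, redSat M r) : ruleSat M R := by
  by_cases hb : ∃ b ∈ R.neg, M b = V4.T
  · obtain ⟨b, hb, hbT⟩ := hb
    calc R.bodyVal M ≤ V4.notv (M b) := R.bodyVal_le_notv M hb
      _ = V4.F := by rw [hbT]; decide
      _ ≤ R.headVal M := bot_le
  · push Not at hb
    rw [xredRule_eq_xredHead hb] at h
    rw [ruleSat, Rule.bodyVal_eq_evalConj fun b hb' => hM.le_Fs (hb b hb')]
    exact le_evalOD_of_redSat_xredHead M R.pos R.c1 R.cs h

theorem redSat_solidify_xredRule {M N : Interp α} {R : Rule α} (hM : solid M)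
    (hNM : interpPreceq N M) (hN : ruleSat N R) :
    ∀ r ∈ xredRule M R, redSat (V4.solidify ∘ N) r := by
  by_cases hb : ∃ b ∈ R.neg, M b = V4.T
  · simp [xredRule, hb]
  · push Not at hb
    rw [xredRule_eq_xredHead hb]
    rw [ruleSat, Rule.bodyVal_eq_evalConj fun b hb' => (hNM b).le_Fs (hM.le_Fs (hb b hb'))] at hN
    exact redSat_solidify_xredHead hNM R.pos R.c1 R.cs
      ((evalConj_mono (fun l => V4.solidify_le (N l)) _).trans hN)

theorem isModel_of_redModel_xreduct_self {P : Set (Rule α)} {M : Interp α} (hM : solid M)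
    (h : redModel M (xreduct M P)) : isModel M P :=
  fun R hR => ruleSat_of_redSat_xredRule hM fun r hr => h r ⟨R, hR, hr⟩

theorem redModel_solidify_xreduct {P : Set (Rule α)} {M N : Interp α} (hM : solid M)
    (hN : isModel N P) (hNM : interpPreceq N M) :
    redModel (V4.solidify ∘ N) (xreduct M P) := by
  rintro r ⟨R, hR, hr⟩
  exact redSat_solidify_xredRule hM hNM (hN R hR) r hr

/-- Every three-valued answer set of an LPOD `P` is, as a
four-valued interpretation, a solid `⪯`-minimal four-valued model of `P`. -/
theorem threeAnswerSet_implies_minimal_solid {α : Type} (P : Set (Rule α))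
    (M : Interp α) (h : threeAnswerSet P M) :
    isModel M P ∧ solid M ∧
      ∀ N : Interp α, isModel N P → interpPreceq N M → N = M := by
  obtain ⟨hM, -, hred, hleast⟩ := h
  refine ⟨isModel_of_redModel_xreduct_self hM hred, hM, fun N hN hNM => funext fun l => ?_⟩
  have hMN := hleast _ (solid_solidify_comp N) (redModel_solidify_xreduct hM hN hNM)
  exact (hNM l).eq_of_le_solidify (hMN l)
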